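/- If κ is an inaccessible cardinal and X ⊆ κ is unbounded in κ, then the forcing T¹(X), whose conditions are bounded 1-closed subsets of X ordered by end-extension, is κ-strategically closed. (Hellsten.) -/

import Mathlib

open FirstOrder FirstOrder.Language ZFSet
open scoped Classical

noncomputable section

def memLang : Language where
  Functions := fun _ => Empty
  Relations := fun n => match n with | 2 => Unit | _ => Empty

def memRel : memLang.Relations 2 := Unit.unit

def mem' (n : ℕ) (i j : Fin n) : memLang.BoundedFormula Empty n :=
  Relations.boundedFormula₂ memRel (Term.var (Sum.inr i)) (Term.var (Sum.inr j))

def eq' (n : ℕ) (i j : Fin n) : memLang.BoundedFormula Empty n :=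
  Term.bdEqual (Term.var (Sum.inr i)) (Term.var (Sum.inr j))

def extAx : memLang.Sentence :=
  ((((mem' 3 2 0).iff (mem' 3 2 1)).all.imp (eq' 2 0 1)).all).all

def pairAx : memLang.Sentence :=
  ((((mem' 3 0 2) ⊓ (mem' 3 1 2)).ex).all).all

def unionAx : memLang.Sentence :=
  (((((mem' 4 2 3) ⊓ (mem' 4 3 0)).imp (mem' 4 2 1)).all.all).ex).all

def foundAx : memLang.Sentence :=
  (((mem' 2 1 0).ex.imp
    (((mem' 2 1 0) ⊓ (((mem' 3 2 1).imp (mem' 3 2 0).not).all)).ex)).all)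


def infAx₁ : memLang.BoundedFormula Empty 1 :=
  ((mem' 2 1 0) ⊓ ((mem' 3 2 1).not.all)).ex

def infAx₂ : memLang.BoundedFormula Empty 1 :=
  ((mem' 2 1 0).imp
    (((mem' 3 2 0) ⊓ ((mem' 3 1 2) ⊓
      (((mem' 4 3 2).iff ((mem' 4 3 1) ⊔ (eq' 4 3 1))).all))).ex)).all

def infAx : memLang.Sentence := (infAx₁ ⊓ infAx₂).ex

def choiceHyp₁ : memLang.BoundedFormula Empty 1 :=
  ((mem' 2 1 0).imp ((mem' 3 2 1).ex)).all

def choiceHyp₂ : memLang.BoundedFormula Empty 1 :=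
  ((((mem' 3 1 0) ⊓ ((mem' 3 2 0) ⊓ (eq' 3 1 2).not)).imp
     (((mem' 4 3 1) ⊓ (mem' 4 3 2)).ex.not)).all).all

def choiceConcl : memLang.BoundedFormula Empty 1 :=
  (((mem' 3 2 0).imp
    (((mem' 4 3 2) ⊓ ((mem' 4 3 1) ⊓
       ((((mem' 5 4 2) ⊓ (mem' 5 4 1)).imp (eq' 5 4 3)).all))).ex)).all).ex

def choiceAx : memLang.Sentence :=
  (((choiceHyp₁ ⊓ choiceHyp₂).imp choiceConcl)).all

def sepAx (n : ℕ) (φ : memLang.BoundedFormula Empty (n + 2)) : memLang.Sentence :=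
  (((((mem' (n+3) ⟨n+2, by omega⟩ ⟨n+1, by omega⟩).iff
      ((mem' (n+3) ⟨n+2, by omega⟩ ⟨n, by omega⟩) ⊓ (φ.liftAt 1 (n+1)))).all).ex).all).alls

def collAx (n : ℕ) (φ : memLang.BoundedFormula Empty (n + 3)) : memLang.Sentence :=
  (((((mem' (n+2) ⟨n+1, by omega⟩ ⟨n, by omega⟩).imp φ.ex).all).imp
    ((((mem' (n+3) ⟨n+2, by omega⟩ ⟨n, by omega⟩).imp
        (((mem' (n+4) ⟨n+3, by omega⟩ ⟨n+1, by omega⟩) ⊓ (φ.liftAt 1 (n+1))).ex)).all).ex)).all).alls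

def ZFCminus : Set memLang.Sentence :=
  {extAx, pairAx, unionAx, foundAx, infAx, choiceAx}
    ∪ (⋃ n, Set.range (sepAx n)) ∪ (⋃ n, Set.range (collAx n))

end

noncomputable section

/-! ## Satisfaction in transitive sets -/

instance zfStr (M : ZFSet.{0}) : memLang.Structure M.toSet where
  funMap := fun {_} f _ => f.elim
  RelMap := fun {n} =>
    match n with
    | 2 => fun _ v => ((v 0 : M.toSet) : ZFSet) ∈ ((v 1 : M.toSet) : ZFSet)
    | 0 => fun r _ => r.elim
    | 1 => fun r _ => r.elim
    | (_+3) => fun r _ => r.elim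

/-- Realization of a formula in the membership structure `(M, ∈)`, with a valuation
taking values in `M`. -/
def RealizeIn (M : ZFSet.{0}) {n : ℕ} (φ : memLang.BoundedFormula Empty n)
    (v : Fin n → ZFSet.{0}) : Prop :=
  ∃ hv : ∀ i, v i ∈ M, φ.Realize (fun e => e.elim) (fun i => (⟨v i, hv i⟩ : M.toSet))

/-- `M ⊨ ZFC⁻`. -/
def ModelsZFCminus (M : ZFSet.{0}) : Prop :=
  ∀ φ ∈ ZFCminus, Sentence.Realize (↥M.toSet) φ

/-! ## Cardinals, ordinals and basic combinatorial notions -/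

/-- The cardinality of (the extension of) a ZF-set. -/
def zcard (x : ZFSet.{0}) : Cardinal := Cardinal.mk x.toSet

/-- `κ` is a (von Neumann) cardinal. -/
def IsCardinalZ (κ : ZFSet.{0}) : Prop :=
  κ.IsOrdinal ∧ ∀ β ∈ κ, zcard β < zcard κ

/-- `κ^{<κ} = κ`. -/
def PowLtEqSelf (κ : ZFSet.{0}) : Prop :=
  ∀ β ∈ κ, zcard κ ^ zcard β ≤ zcard κ

def zsucc (x : ZFSet.{0}) : ZFSet := insert x x

def natZ : ℕ → ZFSet.{0}
  | 0 => ∅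
  | n+1 => zsucc (natZ n)

def iterSucc (β : ZFSet.{0}) : ℕ → ZFSet
  | 0 => β
  | n+1 => zsucc (iterSucc β n)

def IsLimitZ (α : ZFSet.{0}) : Prop := α.IsOrdinal ∧ α ≠ ∅ ∧ ∀ β ∈ α, zsucc β ∈ α

/-- The value `f(x)` of a ZF-coded function `f` at `x`. -/
def app (f x : ZFSet.{0}) : ZFSet :=
  ⋃₀ (ZFSet.sep (fun y => ZFSet.pair x y ∈ f) (⋃₀ (⋃₀ f)))

/-- The restriction `f ↾ β` of a ZF-coded function. -/
def restrictF (f β : ZFSet.{0}) : ZFSet :=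
  ZFSet.sep (fun z => ∃ ξ ∈ β, ∃ y, z = ZFSet.pair ξ y) f

/-! ## κ-models, elementary embeddings and weak compactness,
relative to an ambient class `W` of sets (`W = Set.univ` is the ground universe `V`). -/

/-- `M` is a κ-model (computed relative to the universe `W`): it is transitive, of size `κ`,
contains `κ`, is closed under `<κ`-sequences lying in `W`, and satisfies `ZFC⁻`. -/
def IsKappaModelIn (W : Set ZFSet.{0}) (κ M : ZFSet.{0}) : Prop :=
  M ∈ W ∧ κ ∈ M ∧ M.IsTransitive ∧ zcard M = zcard κ ∧
  (∀ β ∈ κ, ∀ f : ZFSet, f ∈ W → ZFSet.IsFunc β M f → f ∈ M) ∧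
  ModelsZFCminus M

abbrev IsKappaModel (κ M : ZFSet.{0}) : Prop := IsKappaModelIn Set.univ κ M

/-- `j` is an elementary embedding from `(M, ∈)` to `(N, ∈)`. -/
def IsElemEmbedding (M N : ZFSet.{0}) (j : ZFSet.{0} → ZFSet.{0}) : Prop :=
  (∀ x ∈ M, j x ∈ N) ∧
  ∀ (n : ℕ) (φ : memLang.BoundedFormula Empty n) (v : Fin n → ZFSet),
    (∀ i, v i ∈ M) → (RealizeIn M φ v ↔ RealizeIn N φ (fun i => j (v i)))

/-- `j` has critical point `κ`: it fixes every ordinal below `κ` and moves `κ`. -/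
def HasCritPoint (j : ZFSet.{0} → ZFSet.{0}) (κ : ZFSet.{0}) : Prop :=
  (∀ x ∈ κ, j x = x) ∧ κ ∈ j κ

/-- `S` is a weakly compact subset of `κ`, computed relative to the universe `W`:
for every `A ⊆ κ` in `W` there are κ-models `M ∋ A, S` and `N` and an elementary
embedding `j : M → N` with critical point `κ` such that `κ ∈ j(S)`. -/
def IsWeaklyCompactIn (W : Set ZFSet.{0}) (κ S : ZFSet.{0}) : Prop :=
  S ⊆ κ ∧ ∀ A : ZFSet, A ∈ W → A ⊆ κ →
    ∃ (M N : ZFSet) (j : ZFSet → ZFSet),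
      IsKappaModelIn W κ M ∧ IsKappaModelIn W κ N ∧ A ∈ M ∧ S ∈ M ∧
      IsElemEmbedding M N j ∧ HasCritPoint j κ ∧ κ ∈ j S

abbrev IsWeaklyCompactSubset (κ S : ZFSet.{0}) : Prop := IsWeaklyCompactIn Set.univ κ S

/-- `κ` is a weakly compact cardinal (relative to the universe `W`). -/
def IsWCCardinalIn (W : Set ZFSet.{0}) (κ : ZFSet.{0}) : Prop :=
  IsCardinalZ κ ∧ PowLtEqSelf κ ∧ IsWeaklyCompactIn W κ κ

abbrev IsWCCardinal (κ : ZFSet.{0}) : Prop := IsWCCardinalIn Set.univ κ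

/-! ## Clubs, stationarity, inaccessibility, Mahloness -/

/-- `C` is a closed unbounded subset of the ordinal `γ`. -/
def IsClubIn (C γ : ZFSet.{0}) : Prop :=
  C ⊆ γ ∧ (∀ ξ ∈ γ, ∃ η ∈ C, ξ ∈ η ∨ ξ = η) ∧
  ∀ β ∈ γ, (∃ ξ, ξ ∈ β) → (∀ ξ ∈ β, ∃ η, η ∈ C ∧ η ∈ β ∧ ξ ∈ η) → β ∈ C

/-- `S` is a stationary subset of `γ`, relative to the universe `W`. -/
def IsStationaryIn (W : Set ZFSet.{0}) (S γ : ZFSet.{0}) : Prop :=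
  ∀ C : ZFSet, C ∈ W → IsClubIn C γ → ∃ x, x ∈ S ∧ x ∈ C

/-- `γ` is a regular cardinal, relative to the universe `W`. -/
def IsRegularIn (W : Set ZFSet.{0}) (γ : ZFSet.{0}) : Prop :=
  IsCardinalZ γ ∧
  ∀ β ∈ γ, ∀ f : ZFSet, f ∈ W → ZFSet.IsFunc β γ f →
    ∃ δ ∈ γ, ∀ ξ ∈ β, ∀ y, ZFSet.pair ξ y ∈ f → y ∈ δ

/-- `γ` is an inaccessible cardinal (regular, uncountable strong limit),
relative to the universe `W`. -/
def IsInaccessibleIn (W : Set ZFSet.{0}) (γ : ZFSet.{0}) : Prop :=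
  IsRegularIn W γ ∧ ZFSet.omega ∈ γ ∧
  ∀ β ∈ γ, ¬ ∃ f : ZFSet, f ∈ W ∧ ZFSet.IsFunc γ (ZFSet.powerset β) f ∧
    (∀ x x' y, ZFSet.pair x y ∈ f → ZFSet.pair x' y ∈ f → x = x')

/-- `γ` is a Mahlo cardinal: it is inaccessible and the inaccessibles below it
are stationary, relative to the universe `W`. -/
def IsMahloIn (W : Set ZFSet.{0}) (γ : ZFSet.{0}) : Prop :=
  IsInaccessibleIn W γ ∧
  IsStationaryIn W (ZFSet.sep (fun β => IsInaccessibleIn W β) γ) γ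

/-- `C` is 1-closed in `κ`: it contains every inaccessible `γ < κ` in which `C ∩ γ`
is stationary (relative to the universe `W`). -/
def IsOneClosedIn (W : Set ZFSet.{0}) (C κ : ZFSet.{0}) : Prop :=
  ∀ γ ∈ κ, IsInaccessibleIn W γ → IsStationaryIn W (C ∩ γ) γ → γ ∈ C

/-- `C` is 1-club in `κ`: stationary and 1-closed (relative to the universe `W`). -/
def IsOneClubIn (W : Set ZFSet.{0}) (C κ : ZFSet.{0}) : Prop :=
  IsStationaryIn W C κ ∧ IsOneClosedIn W C κ

/-! ## Traces and higher orders of weak compactness -/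

/-- The weakly compact trace operation. -/
def wcTraceIn (W : Set ZFSet.{0}) (κ X : ZFSet.{0}) : ZFSet :=
  ZFSet.sep (fun γ => IsWeaklyCompactIn W γ (X ∩ γ)) κ

/-- Finite iterates of the weakly compact trace operation (on the canonical
representatives of the classes `[X]₁`). -/
def iterWcTraceIn (W : Set ZFSet.{0}) (κ : ZFSet.{0}) : ℕ → ZFSet.{0} → ZFSet.{0}
  | 0, X => X
  | n+1, X => wcTraceIn W κ (iterWcTraceIn W κ n X)

/-- `κ` is an `n`-weakly compact cardinal (relative to the universe `W`):
all iterates `Tr^m_{wc}([κ]₁)` for `m < n` are nonzero, i.e. weakly compact. -/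
def IsNWeaklyCompactIn (W : Set ZFSet.{0}) (κ : ZFSet.{0}) (n : ℕ) : Prop :=
  ∀ m < n, IsWeaklyCompactIn W κ (iterWcTraceIn W κ m κ)

/-- `κ` is an `ω`-weakly compact cardinal (relative to the universe `W`). -/
def IsOmegaWeaklyCompactIn (W : Set ZFSet.{0}) (κ : ZFSet.{0}) : Prop :=
  ∀ n : ℕ, IsWeaklyCompactIn W κ (iterWcTraceIn W κ n κ)

/-- `S^β_n`: the Mahlo cardinals below `β` for `n = 0`, and the `n`-weakly compact
cardinals below `β` for `n > 0` (relative to the universe `W`). -/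
def SsetIn (W : Set ZFSet.{0}) (β : ZFSet.{0}) : ℕ → ZFSet
  | 0 => ZFSet.sep (fun α => IsMahloIn W α) β
  | n+1 => ZFSet.sep (fun α => IsNWeaklyCompactIn W α (n+1)) β

/-- The weakly compact reflection principle `Refl_wc(κ)` (relative to the universe `W`):
`κ` is weakly compact and every weakly compact subset of `κ` has a weakly compact
proper initial segment. -/
def ReflWcIn (W : Set ZFSet.{0}) (κ : ZFSet.{0}) : Prop :=
  IsWCCardinalIn W κ ∧
  ∀ S : ZFSet, S ∈ W → IsWeaklyCompactIn W κ S → ∃ γ ∈ κ, IsWeaklyCompactIn W γ (S ∩ γ)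

end

noncomputable section

/-! ## Forcing notions, generic filters, names and generic extensions -/

/-- The order of a ZF-coded partial order: `p ≤ q` iff `(p, q) ∈ R`. -/
def zle (R p q : ZFSet.{0}) : Prop := ZFSet.pair p q ∈ R

/-- `(P, R)` is a ZF-coded partial order (a forcing notion). -/
def IsPosetOn (P R : ZFSet.{0}) : Prop :=
  R ⊆ ZFSet.prod P P ∧ (∀ p ∈ P, zle R p p) ∧
  ∀ p q r : ZFSet, zle R p q → zle R q r → zle R p r

/-- `D` is a dense subset of the forcing notion `(P, R)`. -/
def IsDenseIn (P R D : ZFSet.{0}) : Prop :=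
  D ⊆ P ∧ ∀ p ∈ P, ∃ q ∈ D, zle R q p

/-- `G` (a class of conditions) is a filter on `(P, R)`. -/
def IsClassFilterOn (P R : ZFSet.{0}) (G : Set ZFSet.{0}) : Prop :=
  (∀ p ∈ G, p ∈ P) ∧ (∀ p ∈ G, ∀ q, q ∈ P → zle R p q → q ∈ G) ∧
  ∀ p ∈ G, ∀ q ∈ G, ∃ r, r ∈ G ∧ zle R r p ∧ zle R r q

/-- `G` is generic over the universe `V` for `(P, R)`: it is a filter meeting every
dense subset of `P` (lying in `V`). -/
def IsGenericOverV (P R : ZFSet.{0}) (G : Set ZFSet.{0}) : Prop :=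
  IsClassFilterOn P R G ∧ ∀ D : ZFSet, IsDenseIn P R D → ∃ q, q ∈ G ∧ q ∈ D

/-- `G` is generic for `(P, R)` over the class `W`: it is a filter meeting every
dense subset of `P` lying in `W`. -/
def IsGenericOverClass (W : Set ZFSet.{0}) (P R : ZFSet.{0}) (G : Set ZFSet.{0}) : Prop :=
  IsClassFilterOn P R G ∧ ∀ D : ZFSet, D ∈ W → IsDenseIn P R D → ∃ q, q ∈ G ∧ q ∈ D

/-- A ZF-coded filter on `(P, R)`. -/
def IsSetFilterOn (P R G : ZFSet.{0}) : Prop :=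
  G ⊆ P ∧ (∀ p ∈ G, ∀ q ∈ P, zle R p q → q ∈ G) ∧
  ∀ p ∈ G, ∀ q ∈ G, ∃ r ∈ G, zle R r p ∧ zle R r q

/-- `G` is a filter on `(P, R)` generic over the (set) model `M`. -/
def IsGenericOverSet (M P R G : ZFSet.{0}) : Prop :=
  IsSetFilterOn P R G ∧ ∀ D : ZFSet, D ∈ M → IsDenseIn P R D → ∃ q ∈ G, q ∈ D

/-- The image of a ZF-set under an arbitrary (class) function. -/
def myImage (f : ZFSet.{0} → ZFSet.{0}) (x : ZFSet.{0}) : ZFSet.{0} :=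
  ZFSet.range.{0,0} (fun a : (Quotient.out x).Type => f (ZFSet.mk ((Quotient.out x).Func a)))

/-- The evaluation `val_G(τ)` of a `P`-name `τ` by a filter `G`
(every ZF-set is regarded as a name). -/
def zval (G : Set ZFSet.{0}) : ZFSet.{0} → ZFSet.{0} :=
  (ZFSet.mem_wf.transGen).fix (fun τ rec =>
    myImage (fun σ => if h : Relation.TransGen (· ∈ ·) σ τ then rec σ h else ∅)
      (ZFSet.sep (fun σ => ∃ p, p ∈ G ∧ ZFSet.pair σ p ∈ τ) (⋃₀ (⋃₀ τ : ZFSet))))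

/-- The generic extension `V[G]` of the universe, as a class: all evaluations of names. -/
def VofG (G : Set ZFSet.{0}) : Set ZFSet.{0} := Set.range (zval G)

/-- The generic extension `M[G]` of a set model `M` by a class filter `G`:
the evaluations of all names lying in `M`. -/
def extClass (M : ZFSet.{0}) (G : Set ZFSet.{0}) : ZFSet.{0} := myImage (zval G) M

/-- The generic extension `M[G]` of a set model `M` by a set filter `G`. -/
def extSet (M G : ZFSet.{0}) : ZFSet.{0} := extClass M {x | x ∈ G}

/-- The check-name `x̌` of a ground model set `x` (relative to the forcing `P`). -/
def checkName (P : ZFSet.{0}) : ZFSet.{0} → ZFSet.{0} :=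
  ZFSet.mem_wf.fix (fun x rec =>
    ⋃₀ (myImage (fun y => if h : y ∈ x then myImage (fun p => ZFSet.pair (rec y h) p) P else ∅) x))

/-- The canonical name `Ġ` for the generic filter. -/
def genName (P : ZFSet.{0}) : ZFSet.{0} :=
  myImage (fun p => ZFSet.pair (checkName P p) p) P

/-- The ground model `V`, as a class. -/
def GroundV : Set ZFSet.{0} := Set.univ

/-- `(P, R)` is `κ`-c.c.: every antichain has size `< κ`. -/
def IsKappaCC (P R κ : ZFSet.{0}) : Prop :=
  ∀ A : ZFSet, A ⊆ P →
    (∀ p ∈ A, ∀ q ∈ A, p ≠ q → ¬ ∃ r ∈ P, zle R r p ∧ zle R r q) →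
    zcard A < zcard κ

/-! ## Games and strategic closure -/

/-- It is Player II's turn at stage `α`: `α` is a limit ordinal, or of the form `λ + (2n+1)`
(Player I moves first, at stage `0`, and Player II plays first at limit stages). -/
def IsIITurn (α : ZFSet.{0}) : Prop :=
  IsLimitZ α ∨ ∃ (β : ZFSet) (n : ℕ), (β = ∅ ∨ IsLimitZ β) ∧ α = iterSucc β (2*n+1)

/-- `f` is a ZF-coded descending sequence of conditions of `(P, R)` of length `α`. -/
def IsDescPlay (P R α f : ZFSet.{0}) : Prop :=
  ZFSet.IsFunc α P f ∧ ∀ β ∈ α, ∀ γ ∈ β, zle R (app f β) (app f γ)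

/-- `s` is (the graph of) a deterministic strategy. -/
def IsFunctionLike (s : ZFSet.{0}) : Prop :=
  ∀ x y y', ZFSet.pair x y ∈ s → ZFSet.pair x y' ∈ s → y = y'

/-- `s` is a winning strategy for Player II in the game `G_δ(P)`: along any descending play
(lying in the universe `W`) in which Player II has followed `s`, when it is Player II's turn
`s` provides a condition below all conditions played so far. -/
def IsWinningStratII (W : Set ZFSet.{0}) (P R δ s : ZFSet.{0}) : Prop :=
  ∀ α ∈ δ, ∀ f : ZFSet, f ∈ W → IsDescPlay P R α f →
    (∀ β ∈ α, IsIITurn β → ZFSet.pair (restrictF f β) (app f β) ∈ s) →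
    IsIITurn α →
    ∃ q, ZFSet.pair (restrictF f α) q ∈ s ∧ q ∈ P ∧ ∀ γ ∈ α, zle R q (app f γ)

/-- `(P, R)` is `δ`-strategically closed, relative to the universe `W`:
Player II has a winning strategy in the game of length `δ`. -/
def IsStratClosedIn (W : Set ZFSet.{0}) (P R δ : ZFSet.{0}) : Prop :=
  ∃ s, s ∈ W ∧ IsFunctionLike s ∧ IsWinningStratII W P R δ s

/-- `(P, R)` is `<κ`-strategically closed relative to `W`. -/
def IsLtStratClosedIn (W : Set ZFSet.{0}) (P R κ : ZFSet.{0}) : Prop :=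
  ∀ δ ∈ κ, IsStratClosedIn W P R δ

/-- `(P, R)` is `α⁺`-closed: every descending sequence of length `< α⁺`
(i.e. of length an ordinal of size `≤ |α|`) has a lower bound in `P`. -/
def IsSuccCardClosed (P R α : ZFSet.{0}) : Prop :=
  ∀ β : ZFSet, β.IsOrdinal → zcard β ≤ zcard α →
    ∀ f : ZFSet, IsDescPlay P R β f → ∃ q ∈ P, ∀ γ ∈ β, zle R q (app f γ)

/-! ## The 1-club shooting forcing `T¹(X)` -/

/-- `c` is bounded below `κ`. -/
def IsBoundedBelow (c κ : ZFSet.{0}) : Prop := ∃ β ∈ κ, c ⊆ β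

/-- The poset `T¹(X)` of bounded 1-closed subsets of `X ⊆ κ`, relative to the universe `W`. -/
def T1In (W : Set ZFSet.{0}) (κ X : ZFSet.{0}) : ZFSet :=
  ZFSet.sep (fun c => c ∈ W ∧ IsBoundedBelow c κ ∧ IsOneClosedIn W c κ) (ZFSet.powerset X)

abbrev T1 (κ X : ZFSet.{0}) : ZFSet := T1In Set.univ κ X

/-- `c₁` end-extends `c₂` (i.e. `c₁ ≤ c₂` in `T¹(X)`). -/
def IsEndExtension (c₁ c₂ : ZFSet.{0}) : Prop :=
  c₂ ⊆ c₁ ∧ ∀ x ∈ c₁, x ∉ c₂ → ∀ y ∈ c₂, y ∈ x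

/-- The end-extension order on `T¹(X)`, as a ZF-coded relation. -/
def T1OrderIn (W : Set ZFSet.{0}) (κ X : ZFSet.{0}) : ZFSet :=
  ZFSet.pairSep (fun c₁ c₂ => IsEndExtension c₁ c₂) (T1In W κ X) (T1In W κ X)

abbrev T1Order (κ X : ZFSet.{0}) : ZFSet := T1OrderIn Set.univ κ X

end

noncomputable section

/-! ## The von Neumann hierarchy -/

/-- The von Neumann hierarchy `V_α` (for `α` an ordinal): `V_x = ⋃_{y ∈ x} 𝒫(V_y)`. -/
def Vrank : ZFSet.{0} → ZFSet.{0} :=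
  ZFSet.mem_wf.fix (fun x rec =>
    ⋃₀ (myImage (fun y => if h : y ∈ x then ZFSet.powerset (rec y h) else ∅) x))

/-! ## Π¹₁-indescribability -/

/-- The language with a membership relation and two unary predicates
(for the parameter `A` and a second-order variable `X`). -/
def memLang2 : Language where
  Functions := fun _ => Empty
  Relations := fun n => match n with | 1 => Fin 2 | 2 => Unit | _ => Empty

/-- The structure `(Vκ, ∈, A, B)`. -/
def str2 (Vk A B : ZFSet.{0}) : memLang2.Structure (↥Vk.toSet) where
  funMap := fun {_} f _ => f.elim
  RelMap := fun {n} =>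
    match n with
    | 1 => fun (r : Fin 2) v => if r = 0 then (((v 0 : Vk.toSet) : ZFSet) ∈ A)
                      else (((v 0 : Vk.toSet) : ZFSet) ∈ B)
    | 2 => fun _ v => ((v 0 : Vk.toSet) : ZFSet) ∈ ((v 1 : Vk.toSet) : ZFSet)
    | 0 => fun r _ => r.elim
    | (_+3) => fun r _ => r.elim

/-- `(Vk, ∈, A) ⊨ ∀X ψ(X)`: the Π¹₁-sentence with first-order matrix `ψ` holds in
`(Vk, ∈, A)`, where the second-order universal quantifier ranges over all subsets of `Vk`. -/
def SatisfiesPi11 (Vk A : ZFSet.{0}) (ψ : memLang2.Sentence) : Prop :=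
  ∀ B : ZFSet, B ⊆ Vk → @Sentence.Realize memLang2 _ (str2 Vk A B) ψ

/-! ## Products of 1-club shooting forcings, and lottery sums -/

/-- The ZF-coded set `[m, ω)` of natural numbers `≥ m`. -/
def omegaFrom (m : ℕ) : ZFSet.{0} :=
  ZFSet.sep (fun n => natZ m ⊆ n) ZFSet.omega

/-- The product `∏_{n ∈ [m, ω)} T¹(γ \ S^γ_n)`, computed relative to the universe `W`. -/
def prodT1In (W : Set ZFSet.{0}) (γ : ZFSet.{0}) (m : ℕ) : ZFSet :=
  ZFSet.sep
    (fun f => f ∈ W ∧ ZFSet.IsFunc (omegaFrom m) (ZFSet.powerset γ) f ∧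
      ∀ n : ℕ, m ≤ n → app f (natZ n) ∈ T1In W γ (γ \ SsetIn W γ n))
    (ZFSet.powerset (ZFSet.prod (omegaFrom m) (ZFSet.powerset γ)))

/-- The (pointwise end-extension) order on the product. -/
def prodT1Le (f g : ZFSet.{0}) (m : ℕ) : Prop :=
  ∀ n : ℕ, m ≤ n → IsEndExtension (app f (natZ n)) (app g (natZ n))

/-- The lottery sum `⊕_{m<ω} ∏_{n ∈ [m,ω)} T¹(γ \ S^γ_n)`, relative to the universe `W`;
`∅` serves as the top element `1`. -/
def lotterySumIn (W : Set ZFSet.{0}) (γ : ZFSet.{0}) : ZFSet :=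
  insert ∅ (ZFSet.sep
    (fun z => ∃ (m : ℕ) (f : ZFSet), z = ZFSet.pair (natZ m) f ∧ f ∈ prodT1In W γ m)
    (ZFSet.prod ZFSet.omega (ZFSet.powerset (ZFSet.prod ZFSet.omega (ZFSet.powerset γ)))))

/-- The order on the lottery sum: everything is below the top `∅`, and
`(m, f) ≤ (m', g)` iff `m = m'` and `f ≤ g` pointwise. -/
def lotteryLeIn (W : Set ZFSet.{0}) (γ : ZFSet.{0}) (a b : ZFSet.{0}) : Prop :=
  b = ∅ ∨ ∃ (m : ℕ) (f g : ZFSet), a = ZFSet.pair (natZ m) f ∧ b = ZFSet.pair (natZ m) g ∧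
    f ∈ prodT1In W γ m ∧ g ∈ prodT1In W γ m ∧ prodT1Le f g m

/-- The order on the lottery sum, as a ZF-coded relation. -/
def lotteryOrderIn (W : Set ZFSet.{0}) (γ : ZFSet.{0}) : ZFSet :=
  ZFSet.pairSep (fun a b => lotteryLeIn W γ a b) (lotterySumIn W γ) (lotterySumIn W γ)

/-! ## Easton-support iterations -/

/-- `p` is a ZF-coded function with domain `α`. -/
def IsFuncWithDomain (p α : ZFSet.{0}) : Prop := ∃ y : ZFSet, ZFSet.IsFunc α y p

/-- `p` (a condition of an iteration of length `α`) has Easton support: its support is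
bounded below every inaccessible `δ ≤ α` (stages where `p` takes the trivial value `∅`
are outside the support). -/
def HasEastonSupport (p α : ZFSet.{0}) : Prop :=
  ∀ δ : ZFSet, IsInaccessibleIn Set.univ δ → (δ ∈ α ∨ δ = α) →
    ∃ β ∈ δ, ∀ ξ ∈ δ, app p ξ ≠ ∅ → ξ ∈ β

/-- The restriction of a class filter `G` on an iteration to the first `β` stages. -/
def resFilter (G : Set ZFSet.{0}) (β : ZFSet.{0}) : Set ZFSet.{0} :=
  {q | ∃ p, p ∈ G ∧ q = restrictF p β}

/-- `⟨(P_α, Q̇_α) : α < κ⟩` is an Easton-support forcing iteration (described by the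
cumulative sequence of initial segments `Pseq α` with orders `Rseq α`, whose conditions
are functions with domain `α` and Easton support, coherent under restriction). -/
structure IsEastonIteration (κ : ZFSet.{0}) (Pseq Rseq : ZFSet.{0} → ZFSet.{0}) : Prop where
  isOrd : κ.IsOrdinal
  poset : ∀ α : ZFSet, α.IsOrdinal → (α ∈ κ ∨ α = κ) → IsPosetOn (Pseq α) (Rseq α)
  conds : ∀ α : ZFSet, α.IsOrdinal → (α ∈ κ ∨ α = κ) →
    ∀ p ∈ Pseq α, IsFuncWithDomain p α ∧ HasEastonSupport p α
  coherMem : ∀ α : ZFSet, α.IsOrdinal → (α ∈ κ ∨ α = κ) →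
    ∀ β ∈ α, ∀ p ∈ Pseq α, restrictF p β ∈ Pseq β
  coherLe : ∀ α : ZFSet, α.IsOrdinal → (α ∈ κ ∨ α = κ) →
    ∀ β ∈ α, ∀ p ∈ Pseq α, ∀ q ∈ Pseq α,
      zle (Rseq α) p q → zle (Rseq β) (restrictF p β) (restrictF q β)
  genRes : ∀ α : ZFSet, α.IsOrdinal → (α ∈ κ ∨ α = κ) → ∀ β ∈ α,
    ∀ G : Set ZFSet, IsGenericOverV (Pseq α) (Rseq α) G →
      IsGenericOverV (Pseq β) (Rseq β) (resFilter G β)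

/-- The main iteration of the paper: the Easton-support iteration which, at each stage
`γ < κ` that is Mahlo in `V`, forces with the lottery sum
`⊕_{m<ω} ∏_{n ∈ [m,ω)} T¹(γ \ S^γ_n)` as computed in `V^{P_γ}`, and trivially at
other stages.  The stage-`γ` behaviour is described by evaluating the stage-`γ`
components of conditions by a generic for the first `γ` stages. -/
structure IsMainIteration (κ : ZFSet.{0}) (Pseq Rseq : ZFSet.{0} → ZFSet.{0})
    extends IsEastonIteration κ Pseq Rseq : Prop where
  trivialStage : ∀ γ ∈ κ, ¬ IsMahloIn Set.univ γ → ∀ p ∈ Pseq κ, app p γ = ∅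
  lotteryStage : ∀ γ ∈ κ, IsMahloIn Set.univ γ →
    ∀ G : Set ZFSet, IsGenericOverV (Pseq γ) (Rseq γ) G →
      (∀ p ∈ Pseq (zsucc γ), zval G (app p γ) ∈ lotterySumIn (VofG G) γ) ∧
      (∀ q ∈ lotterySumIn (VofG G) γ, ∃ p ∈ Pseq (zsucc γ), zval G (app p γ) = q) ∧
      (∀ p ∈ Pseq (zsucc γ), ∀ q ∈ Pseq (zsucc γ), zle (Rseq (zsucc γ)) p q →
        zle (lotteryOrderIn (VofG G) γ) (zval G (app p γ)) (zval G (app q γ)))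

/-- An Easton-support iteration all of whose stages are (forced to be)
`α`-strategically closed. -/
structure IsStratClosedIteration (κ : ZFSet.{0}) (Pseq Rseq : ZFSet.{0} → ZFSet.{0})
    extends IsEastonIteration κ Pseq Rseq : Prop where
  stageClosed : ∀ α ∈ κ,
    ∀ G : Set ZFSet, IsGenericOverV (Pseq α) (Rseq α) G →
      ∃ Q R' : ZFSet, Q ∈ VofG G ∧ R' ∈ VofG G ∧ IsPosetOn Q R' ∧
        IsStratClosedIn (VofG G) Q R' α ∧
        (∀ p ∈ Pseq (zsucc α), zval G (app p α) ∈ Q) ∧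
        (∀ q ∈ Q, ∃ p ∈ Pseq (zsucc α), zval G (app p α) = q) ∧
        (∀ p ∈ Pseq (zsucc α), ∀ q ∈ Pseq (zsucc α), zle (Rseq (zsucc α)) p q →
          zle R' (zval G (app p α)) (zval G (app q α)))

end

noncomputable section

/-! ## Miscellaneous auxiliary notions used in the statements -/

/-- `M` is an elementary substructure of `(H, ∈)`. -/
def IsElemSubstructure (M H : ZFSet.{0}) : Prop :=
  M ⊆ H ∧ ∀ (n : ℕ) (φ : memLang.BoundedFormula Empty n) (v : Fin n → ZFSet),
    (∀ i, v i ∈ M) → (RealizeIn M φ v ↔ RealizeIn H φ v)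

/-- `H = H_{κ⁺}`: the sets whose transitive closure has size at most `κ`. -/
def IsHkappaPlus (κ H : ZFSet.{0}) : Prop :=
  ∀ x : ZFSet, x ∈ H ↔ ∃ t : ZFSet, x ⊆ t ∧ t.IsTransitive ∧ zcard t ≤ zcard κ

/-- `I` is a (proper) ideal on `lam`. -/
def IsIdealOn (lam I : ZFSet.{0}) : Prop :=
  (∀ X ∈ I, X ⊆ lam) ∧ ∅ ∈ I ∧ lam ∉ I ∧
  (∀ X ∈ I, ∀ Y : ZFSet, Y ⊆ X → Y ∈ I) ∧
  (∀ X ∈ I, ∀ Y ∈ I, X ∪ Y ∈ I)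

/-- `I` is `lam`-complete: it is closed under unions of fewer than `lam` members. -/
def IsLamCompleteIdeal (lam I : ZFSet.{0}) : Prop :=
  ∀ x : ZFSet, x ⊆ I → zcard x < zcard lam → (⋃₀ x : ZFSet) ∈ I

/-- `I` is a normal `lam`-complete (proper) ideal on `lam`: every regressive ZF-coded
function on an `I`-positive set is constant on an `I`-positive set. -/
def IsNormalIdealOn (lam I : ZFSet.{0}) : Prop :=
  IsIdealOn lam I ∧ IsLamCompleteIdeal lam I ∧
  ∀ S : ZFSet, S ⊆ lam → S ∉ I →
    ∀ f : ZFSet, ZFSet.IsFunc S lam f → (∀ α ∈ S, α ≠ ∅ → app f α ∈ α) →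
      ∃ β ∈ lam, ZFSet.sep (fun α => ZFSet.pair α β ∈ f) S ∉ I

/-- The pair `(W, V)` has the `δ`-approximation property. -/
def HasApproxProperty (W : Set ZFSet.{0}) (δ : ZFSet.{0}) : Prop :=
  ∀ A : ZFSet, (∀ a ∈ A, a ∈ W) →
    (∀ a : ZFSet, a ∈ W → zcard a < zcard δ → A ∩ a ∈ W) → A ∈ W

/-- The pair `(W, V)` has the `δ`-cover property. -/
def HasCoverProperty (W : Set ZFSet.{0}) (δ : ZFSet.{0}) : Prop :=
  ∀ A : ZFSet, (∀ a ∈ A, a ∈ W) → zcard A < zcard δ →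
    ∃ B : ZFSet, B ∈ W ∧ A ⊆ B ∧ zcard B < zcard δ

/-- The dense set `D_α = {c ∈ T¹(X) : sup c > α⁺}` (a set `c` has `sup c > α⁺` iff it
contains an ordinal of cardinality greater than `|α|`). -/
def DsetT1 (κ X α : ZFSet.{0}) : ZFSet :=
  ZFSet.sep (fun c => ∃ ξ ∈ c, zcard α < zcard ξ) (T1 κ X)

/-- The `1`-club `C = ⋃ {f(m) : f ∈ I_γ}` added by the product selected by the lottery
held at stage `γ` of the main iteration. -/
def stageClub (G : Set ZFSet.{0}) (γ : ZFSet.{0}) (m : ℕ) : ZFSet :=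
  ZFSet.sep (fun ξ => ∃ p, p ∈ G ∧ ∃ f : ZFSet,
    zval (resFilter G γ) (app p γ) = ZFSet.pair (natZ m) f ∧ ξ ∈ app f (natZ m)) γ

end


/-!
Player II answers every position with the union `U` of the conditions played so far, topped with
one point `ξ ∈ X` above `sup U`; such a `ξ` exists because `sup U < κ` by regularity of `κ`. Since
every condition is an end-extension of the earlier ones, the answer extends all of them, and only
the 1-closedness of `U` at an inaccessible `γ` with `U ∩ γ` stationary needs an argument. If
`U ∩ γ` equals `f(β) ∩ γ` for some stage `β`, the 1-closedness of `f(β)` applies. Otherwise every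
stage supremum `sup f(β)` is below `γ`. If they are bounded in `γ`, so is `U ∩ γ`; if not, their
limit points form a club in the regular uncountable `γ`, and no such limit point `η` is played:
the least stage whose supremum reaches `η` is a limit stage `β` with `sup U_β = η`, where Player II
played a point above `η`.
-/

namespace ZFSet

theorem isOrdinal_sUnion {x : ZFSet} (h : ∀ y ∈ x, y.IsOrdinal) : (⋃₀ x).IsOrdinal :=
  isOrdinal_iff_forall_mem_isOrdinal.2
    ⟨IsTransitive.sUnion' fun y hy => (h y hy).isTransitive, fun _ hz =>
      let ⟨w, hw, hzw⟩ := mem_sUnion.1 hz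
      (h w hw).mem hzw⟩

theorem subset_sUnion_of_mem {x y : ZFSet} (h : y ∈ x) : y ⊆ ⋃₀ x :=
  fun _ hz => mem_sUnion_of_mem hz h

theorem sUnion_subset {x b : ZFSet} (h : ∀ y ∈ x, y ⊆ b) : ⋃₀ x ⊆ b := fun _ hz =>
  let ⟨w, hw, hzw⟩ := mem_sUnion.1 hz
  h w hw hzw

theorem app_eq_of_pair_mem {g z w : ZFSet} (hw : pair z w ∈ g)
    (hu : ∀ w', pair z w' ∈ g → w' = w) : app g z = w := by
  have hsep : ZFSet.sep (fun y => pair z y ∈ g) (⋃₀ ⋃₀ g) = {w} := by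
    ext y
    rw [mem_sep, mem_singleton]
    refine ⟨fun h => hu y h.2, ?_⟩
    rintro rfl
    exact ⟨mem_sUnion_of_mem (mem_pair.2 (Or.inr rfl))
      (mem_sUnion_of_mem (mem_pair.2 (Or.inr rfl)) hw), hw⟩
  rw [app, hsep, sUnion_singleton]

theorem IsFunc.pair_mem_iff {A B f z w : ZFSet} (hf : IsFunc A B f) (hz : z ∈ A) :
    pair z w ∈ f ↔ app f z = w := by
  obtain ⟨v, hv, hu⟩ := hf.2 z hz
  rw [app_eq_of_pair_mem hv hu]
  exact ⟨fun h => (hu w h).symm, fun h => h ▸ hv⟩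

theorem IsFunc.app_mem {A B f z : ZFSet} (hf : IsFunc A B f) (hz : z ∈ A) : app f z ∈ B :=
  (pair_mem_prod.1 (hf.1 ((hf.pair_mem_iff hz).2 rfl))).2

theorem pair_mem_restrictF {f β z w : ZFSet} :
    pair z w ∈ restrictF f β ↔ pair z w ∈ f ∧ z ∈ β := by
  rw [restrictF, mem_sep]
  refine ⟨fun ⟨hf, ξ, hξ, y, hy⟩ => ?_, fun ⟨hf, hz⟩ => ⟨hf, z, hz, w, rfl⟩⟩
  obtain ⟨rfl, -⟩ := pair_injective hy
  exact ⟨hf, hξ⟩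

def relRange (x : ZFSet) : ZFSet := ZFSet.sep (fun c => ∃ z, pair z c ∈ x) (⋃₀ ⋃₀ x)

theorem mem_relRange {x c : ZFSet} : c ∈ relRange x ↔ ∃ z, pair z c ∈ x := by
  rw [relRange, mem_sep, and_iff_right_iff_imp]
  rintro ⟨z, hz⟩
  exact mem_sUnion_of_mem (mem_pair.2 (Or.inr rfl))
    (mem_sUnion_of_mem (mem_pair.2 (Or.inr rfl)) hz)

theorem IsFunc.mem_relRange_restrictF {A B f β c : ZFSet} (hf : IsFunc A B f) (hβ : β ⊆ A) :
    c ∈ relRange (restrictF f β) ↔ ∃ b ∈ β, app f b = c := by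
  simp only [mem_relRange, pair_mem_restrictF]
  exact ⟨fun ⟨z, hz, hzβ⟩ => ⟨z, hzβ, (hf.pair_mem_iff (hβ hzβ)).1 hz⟩,
    fun ⟨b, hb, hbc⟩ => ⟨b, (hf.pair_mem_iff (hβ hb)).2 hbc, hb⟩⟩

theorem natZ_eq_toZFSet (n : ℕ) : natZ n = (n : Ordinal).toZFSet := by
  induction n with
  | zero => simp [natZ, Ordinal.toZFSet_zero]
  | succ n ih => rw [natZ, ih, Nat.cast_succ, Ordinal.toZFSet_add_one]; rfl

theorem natZ_injective : Function.Injective natZ := fun m n h => by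
  rw [natZ_eq_toZFSet, natZ_eq_toZFSet] at h
  exact_mod_cast Ordinal.toZFSet_injective h

theorem natZ_mem_omega (n : ℕ) : natZ n ∈ omega := by
  induction n with
  | zero => exact omega_zero
  | succ n ih => exact omega_succ ih

theorem aleph0_le_zcard {x : ZFSet} (h : omega ⊆ x) : Cardinal.aleph0 ≤ zcard x := by
  rw [zcard, Cardinal.aleph0_le_mk_iff, Set.infinite_coe_iff]
  exact Set.infinite_of_injective_forall_mem natZ_injective fun n => h (natZ_mem_omega n)

theorem IsCardinalZ.zsucc_mem {κ ξ : ZFSet} (hκ : IsCardinalZ κ) (hω : omega ∈ κ) (hξ : ξ ∈ κ) :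
    zsucc ξ ∈ κ := by
  have hξo := hκ.1.mem hξ
  refine ((isOrdinal_succ hξo).mem_or_subset hκ.1).resolve_right fun hsub => ?_
  have hωξ : omega ⊆ ξ := by
    rcases mem_insert_iff.1 (hsub hω) with h | h
    exacts [h ▸ subset_rfl, hξo.subset_of_mem h]
  have hcard : zcard (zsucc ξ) = zcard ξ := by
    change Cardinal.mk (↑(insert ξ ξ) : Set ZFSet) = Cardinal.mk (ξ : Set ZFSet)
    rw [coe_insert, Cardinal.mk_insert (mem_irrefl ξ)]
    exact Cardinal.add_one_eq (aleph0_le_zcard hωξ)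
  exact (hκ.2 ξ hξ).not_ge (hcard ▸ Cardinal.mk_le_mk_of_subset (coe_subset_coe.2 hsub))

end ZFSet

theorem IsInaccessibleIn.isLimitZ {W : Set ZFSet} {γ : ZFSet} (h : IsInaccessibleIn W γ) :
    IsLimitZ γ :=
  ⟨h.1.1.1, fun h0 => notMem_empty _ (h0 ▸ h.2.1), fun _ hβ => h.1.1.zsucc_mem h.2.1 hβ⟩

theorem IsRegularIn.exists_bound {γ β : ZFSet} (hγ : IsRegularIn Set.univ γ) (hβ : β ∈ γ)
    (g : ZFSet → ZFSet) (hg : ∀ x ∈ β, g x ∈ γ) : ∃ δ ∈ γ, ∀ x ∈ β, g x ∈ δ := by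
  let graph := ZFSet.sep (fun w => ∃ x ∈ β, w = pair x (g x)) (prod β γ)
  have hgraph : ∀ x ∈ β, pair x (g x) ∈ graph := fun x hx =>
    mem_sep.2 ⟨pair_mem_prod.2 ⟨hx, hg x hx⟩, x, hx, rfl⟩
  have hfun : IsFunc β γ graph := by
    refine ⟨fun w hw => (mem_sep.1 hw).1, fun x hx => ⟨g x, hgraph x hx, fun y hy => ?_⟩⟩
    obtain ⟨-, x', -, hxy⟩ := mem_sep.1 hy
    obtain ⟨rfl, rfl⟩ := pair_injective hxy
    rfl
  obtain ⟨δ, hδ, hbound⟩ := hγ.2 β hβ graph trivial hfun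
  exact ⟨δ, hδ, fun x hx => hbound x hx (g x) (hgraph x hx)⟩

theorem IsRegularIn.exists_bound_nat {γ : ZFSet} (hγ : IsRegularIn Set.univ γ) (hω : omega ∈ γ)
    (a : ℕ → ZFSet) (ha : ∀ n, a n ∈ γ) : ∃ δ ∈ γ, ∀ n, a n ∈ δ := by
  obtain ⟨δ, hδ, hbound⟩ := hγ.exists_bound hω (a ∘ Function.invFun natZ) fun _ _ => ha _
  refine ⟨δ, hδ, fun n => ?_⟩
  simpa [Function.leftInverse_invFun natZ_injective n] using hbound _ (natZ_mem_omega n)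

theorem isClubIn_sep_mem {γ δ : ZFSet} (hγ : IsLimitZ γ) (hδ : δ ∈ γ) :
    IsClubIn (ZFSet.sep (fun η => δ ∈ η) γ) γ := by
  refine ⟨fun _ h => (mem_sep.1 h).1, fun ζ hζ => ?_, fun β hβ ⟨ξ, hξ⟩ hcl => ?_⟩
  · rcases (hγ.1.mem hδ).mem_or_subset (hγ.1.mem hζ) with h | h
    · exact ⟨ζ, mem_sep.2 ⟨hζ, h⟩, Or.inr rfl⟩
    · refine ⟨zsucc δ, mem_sep.2 ⟨hγ.2.2 δ hδ, mem_insert δ δ⟩, Or.inl ?_⟩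
      rcases ((hγ.1.mem hζ).subset_iff_eq_or_mem (hγ.1.mem hδ)).1 h with rfl | h
      exacts [mem_insert _ _, mem_insert_of_mem _ h]
  · obtain ⟨η, hη, hηβ, -⟩ := hcl ξ hξ
    exact mem_sep.2 ⟨hβ, (hγ.1.mem hβ).mem_trans (mem_sep.1 hη).2 hηβ⟩

theorem IsStationaryIn.exists_mem_gt {S γ δ : ZFSet} (hS : IsStationaryIn Set.univ S γ)
    (hγ : IsLimitZ γ) (hδ : δ ∈ γ) : ∃ x ∈ S, δ ∈ x := by
  obtain ⟨x, hxS, hxC⟩ := hS _ trivial (isClubIn_sep_mem hγ hδ)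
  exact ⟨x, hxS, (mem_sep.1 hxC).2⟩

def limitPoints (A : Set ZFSet) (γ : ZFSet) : ZFSet :=
  ZFSet.sep (fun η => (∃ a ∈ A, a ∈ η) ∧ ∀ ζ ∈ η, ∃ a ∈ A, ζ ∈ a ∧ a ∈ η) γ

theorem exists_increasing_seq {A : Set ZFSet} {γ ξ : ZFSet} (hA : ∀ a ∈ A, a ∈ γ)
    (hunb : ∀ δ ∈ γ, ∃ a ∈ A, δ ∈ a) (hξ : ξ ∈ γ) :
    ∃ a : ℕ → ZFSet, ξ ∈ a 0 ∧ ∀ n, a n ∈ A ∧ a n ∈ a (n + 1) := by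
  choose! next hnextA hnext using hunb
  have hiter : ∀ n, next^[n] ξ ∈ γ := by
    intro n
    induction n with
    | zero => exact hξ
    | succ n ih => rw [Function.iterate_succ_apply']; exact hA _ (hnextA _ ih)
  refine ⟨fun n => next^[n + 1] ξ, hnext ξ hξ, fun n => ⟨?_, ?_⟩⟩
  · simp only [Function.iterate_succ_apply']
    exact hnextA _ (hiter n)
  · simp only [Function.iterate_succ_apply' _ (n + 1)]
    exact hnext _ (hiter (n + 1))

theorem isClubIn_limitPoints {A : Set ZFSet} {γ : ZFSet} (hγ : IsRegularIn Set.univ γ)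
    (hω : omega ∈ γ) (hA : ∀ a ∈ A, a ∈ γ) (hunb : ∀ δ ∈ γ, ∃ a ∈ A, δ ∈ a) :
    IsClubIn (limitPoints A γ) γ := by
  have hγo := hγ.1.1
  refine ⟨fun _ h => (mem_sep.1 h).1, fun ξ hξ => ?_, fun β hβ ⟨ξ, hξ⟩ hcl => ?_⟩
  · obtain ⟨a, hξa, ha⟩ := exists_increasing_seq hA hunb hξ
    have haγ : ∀ n, a n ∈ γ := fun n => hA _ (ha n).1
    obtain ⟨δ, hδ, hbound⟩ := hγ.exists_bound_nat hω a haγ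
    have hηo : (ZFSet.iUnion a).IsOrdinal := isOrdinal_iff_forall_mem_isOrdinal.2
      ⟨IsTransitive.iUnion fun n => (hγo.mem (haγ n)).isTransitive, fun _ hy =>
        let ⟨n, hn⟩ := mem_iUnion.1 hy
        (hγo.mem (haγ n)).mem hn⟩
    have hηγ : ZFSet.iUnion a ∈ γ := hηo.mem_of_subset_of_mem hγo (fun y hy =>
      let ⟨n, hn⟩ := mem_iUnion.1 hy
      (hγo.mem hδ).mem_trans hn (hbound n)) hδ
    have hmem : ∀ n, a n ∈ ZFSet.iUnion a := fun n => subset_iUnion a (n + 1) (ha n).2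
    refine ⟨ZFSet.iUnion a, mem_sep.2 ⟨hηγ, ⟨a 0, (ha 0).1, hmem 0⟩, fun ζ hζ => ?_⟩,
      Or.inl (subset_iUnion a 0 hξa)⟩
    obtain ⟨n, hn⟩ := mem_iUnion.1 hζ
    exact ⟨a (n + 1), (ha _).1, (hγo.mem (haγ _)).mem_trans hn (ha n).2, hmem _⟩
  · have hβo := hγo.mem hβ
    obtain ⟨η, hη, hηβ, -⟩ := hcl ξ hξ
    obtain ⟨a, haA, haη⟩ := (mem_sep.1 hη).2.1
    refine mem_sep.2 ⟨hβ, ⟨a, haA, hβo.mem_trans haη hηβ⟩, fun ζ hζ => ?_⟩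
    obtain ⟨η', hη', hη'β, hζη'⟩ := hcl ζ hζ
    obtain ⟨a', ha'A, hζa', ha'η'⟩ := (mem_sep.1 hη').2.2 ζ hζη'
    exact ⟨a', ha'A, hζa', hβo.mem_trans ha'η' hη'β⟩

theorem mem_T1_iff {κ X c : ZFSet} :
    c ∈ T1 κ X ↔ c ⊆ X ∧ IsBoundedBelow c κ ∧ IsOneClosedIn Set.univ c κ := by
  simp only [T1, T1In, mem_sep, mem_powerset, Set.mem_univ, true_and]

theorem zle_T1Order_iff {κ X p q : ZFSet} :
    zle (T1Order κ X) p q ↔ p ∈ T1 κ X ∧ q ∈ T1 κ X ∧ IsEndExtension p q := by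
  rw [zle, T1Order, T1OrderIn, mem_pairSep]
  constructor
  · rintro ⟨a, ha, b, hb, hab, h⟩
    obtain ⟨rfl, rfl⟩ := pair_injective hab
    exact ⟨ha, hb, h⟩
  · rintro ⟨hp, hq, h⟩
    exact ⟨p, hp, q, hq, rfl, h⟩

theorem IsEndExtension.trans {a b c : ZFSet} (hab : IsEndExtension a b)
    (hbc : IsEndExtension b c) : IsEndExtension a c := by
  refine ⟨fun x hx => hab.1 (hbc.1 hx), fun x hxa hxc y hyc => ?_⟩
  by_cases hxb : x ∈ b
  · exact hbc.2 x hxb hxc y hyc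
  · exact hab.2 x hxa hxb y (hbc.1 hyc)

theorem isEndExtension_insert {c ξ : ZFSet} (h : ∀ y ∈ c, y ∈ ξ) :
    IsEndExtension (insert ξ c) c := by
  refine ⟨fun _ hy => mem_insert_of_mem _ hy, fun x hx hxc y hy => ?_⟩
  rcases mem_insert_iff.1 hx with rfl | hx
  exacts [h y hy, absurd hx hxc]

theorem isOneClosedIn_insert {κ U ξ : ZFSet} (hκ : κ.IsOrdinal) (hU : IsOneClosedIn Set.univ U κ)
    (hξ : ξ.IsOrdinal) (hξU : ∀ y ∈ U, y ∈ ξ) : IsOneClosedIn Set.univ (insert ξ U) κ := by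
  intro γ hγκ hγ hstat
  rcases hξ.mem_trichotomous (hκ.mem hγκ) with hξγ | rfl | hγξ
  · obtain ⟨x, hx, hξx⟩ := hstat.exists_mem_gt hγ.isLimitZ hξγ
    rcases mem_insert_iff.1 (mem_inter.1 hx).1 with rfl | hxU
    exacts [absurd hξx (mem_irrefl _), absurd hξx (mem_asymm (hξU x hxU))]
  · exact mem_insert _ _
  · have hinter : insert ξ U ∩ γ = U ∩ γ := by
      ext x
      simp only [mem_inter, mem_insert_iff]
      refine ⟨fun ⟨hx, hxγ⟩ => ⟨hx.resolve_left ?_, hxγ⟩, fun ⟨hx, hxγ⟩ => ⟨Or.inr hx, hxγ⟩⟩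
      rintro rfl
      exact mem_asymm hγξ hxγ
    rw [hinter] at hstat
    exact mem_insert_of_mem _ (hU γ hγκ hγ hstat)

def playUnion (f β : ZFSet) : ZFSet := ⋃₀ relRange (restrictF f β)

def stageSup (f β : ZFSet) : ZFSet := ⋃₀ app f β

theorem subset_stageSup {f β y : ZFSet} (hy : y ∈ app f β) : y ⊆ stageSup f β :=
  subset_sUnion_of_mem hy

namespace IsDescPlay

variable {κ X α f β b : ZFSet}

theorem app_mem_T1 (hf : IsDescPlay (T1 κ X) (T1Order κ X) α f) (hβ : β ∈ α) :
    app f β ∈ T1 κ X :=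
  hf.1.app_mem hβ

theorem isEndExtension (hf : IsDescPlay (T1 κ X) (T1Order κ X) α f) (hβ : β ∈ α) (hb : b ∈ β) :
    IsEndExtension (app f β) (app f b) :=
  (zle_T1Order_iff.1 (hf.2 β hβ b hb)).2.2

theorem app_subset_app (hf : IsDescPlay (T1 κ X) (T1Order κ X) α f) (hα : α.IsOrdinal)
    (hβ : β ∈ α) (hb : b ∈ α) (hbβ : b ⊆ β) : app f b ⊆ app f β := by
  rcases ((hα.mem hb).subset_iff_eq_or_mem (hα.mem hβ)).1 hbβ with rfl | h
  exacts [subset_rfl, (hf.isEndExtension hβ h).1]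

theorem mem_playUnion (hf : IsDescPlay (T1 κ X) (T1Order κ X) α f) (hβ : β ⊆ α) {y : ZFSet} :
    y ∈ playUnion f β ↔ ∃ b ∈ β, y ∈ app f b := by
  simp only [playUnion, mem_sUnion, hf.1.mem_relRange_restrictF hβ]
  constructor
  · rintro ⟨_, ⟨b, hb, rfl⟩, hy⟩
    exact ⟨b, hb, hy⟩
  · rintro ⟨b, hb, hy⟩
    exact ⟨_, ⟨b, hb, rfl⟩, hy⟩

theorem isOrdinal_of_mem_app (hf : IsDescPlay (T1 κ X) (T1Order κ X) α f)
    (hXo : ∀ y ∈ X, y.IsOrdinal) (hβ : β ∈ α) {y : ZFSet} (hy : y ∈ app f β) : y.IsOrdinal :=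
  hXo y ((mem_T1_iff.1 (hf.app_mem_T1 hβ)).1 hy)

theorem isOrdinal_stageSup (hf : IsDescPlay (T1 κ X) (T1Order κ X) α f)
    (hXo : ∀ y ∈ X, y.IsOrdinal) (hβ : β ∈ α) : (stageSup f β).IsOrdinal :=
  isOrdinal_sUnion fun _ hy => hf.isOrdinal_of_mem_app hXo hβ hy

theorem stageSup_mono (hf : IsDescPlay (T1 κ X) (T1Order κ X) α f) (hα : α.IsOrdinal)
    (hβ : β ∈ α) (hb : b ∈ α) (hbβ : b ⊆ β) : stageSup f b ⊆ stageSup f β := fun _ hz =>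
  let ⟨_, hw, hzw⟩ := mem_sUnion.1 hz
  mem_sUnion_of_mem hzw (hf.app_subset_app hα hβ hb hbβ hw)

theorem stageSup_mem (hf : IsDescPlay (T1 κ X) (T1Order κ X) α f) (hXo : ∀ y ∈ X, y.IsOrdinal)
    (hκ : κ.IsOrdinal) (hβ : β ∈ α) : stageSup f β ∈ κ := by
  obtain ⟨b, hbκ, hcb⟩ := (mem_T1_iff.1 (hf.app_mem_T1 hβ)).2.1
  exact (hf.isOrdinal_stageSup hXo hβ).mem_of_subset_of_mem hκ
    (sUnion_subset fun _ hy => (hκ.mem hbκ).subset_of_mem (hcb hy)) hbκ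

theorem isEndExtension_playUnion (hf : IsDescPlay (T1 κ X) (T1Order κ X) α f)
    (hα : α.IsOrdinal) (hβ : β ∈ α) : IsEndExtension (playUnion f α) (app f β) := by
  refine ⟨fun y hy => (hf.mem_playUnion subset_rfl).2 ⟨β, hβ, hy⟩, fun x hx hxβ y hy => ?_⟩
  obtain ⟨b, hb, hxb⟩ := (hf.mem_playUnion subset_rfl).1 hx
  rcases (hα.mem hβ).mem_or_subset (hα.mem hb) with h | h
  · exact (hf.isEndExtension hb h).2 x hxb hxβ y hy
  · exact absurd (hf.app_subset_app hα hβ hb h hxb) hxβ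

theorem sUnion_playUnion_mem (hf : IsDescPlay (T1 κ X) (T1Order κ X) α f)
    (hXo : ∀ y ∈ X, y.IsOrdinal) (hκ : IsRegularIn Set.univ κ) (hα : α ∈ κ) :
    ⋃₀ playUnion f α ∈ κ := by
  have hκo := hκ.1.1
  obtain ⟨δ, hδ, hbound⟩ :=
    hκ.exists_bound hα (stageSup f) fun _ hβ => hf.stageSup_mem hXo hκo hβ
  refine (isOrdinal_sUnion fun y hy => ?_).mem_of_subset_of_mem hκo
    (sUnion_subset fun y hy => ?_) hδ
  all_goals obtain ⟨β, hβ, hyβ⟩ := (hf.mem_playUnion subset_rfl).1 hy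
  · exact hf.isOrdinal_of_mem_app hXo hβ hyβ
  · exact fun _ hz => (hκo.mem hδ).mem_trans (subset_stageSup hyβ hz) (hbound β hβ)

theorem exists_inter_eq_or_stageSup_mem (hf : IsDescPlay (T1 κ X) (T1Order κ X) α f)
    (hXo : ∀ y ∈ X, y.IsOrdinal) (hα : α.IsOrdinal) {γ : ZFSet} (hγ : γ.IsOrdinal) :
    (∃ β ∈ α, playUnion f α ∩ γ = app f β ∩ γ) ∨ ∀ β ∈ α, stageSup f β ∈ γ := by
  refine or_iff_not_imp_left.2 fun hne β hβ => ?_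
  have hext := hf.isEndExtension_playUnion hα hβ
  obtain ⟨x, hx, hxβ⟩ : ∃ x ∈ playUnion f α ∩ γ, x ∉ app f β := by
    by_contra! h
    refine hne ⟨β, hβ, ZFSet.ext fun x => ⟨fun hx => mem_inter.2 ⟨h x hx, (mem_inter.1 hx).2⟩,
      fun hx => mem_inter.2 ⟨hext.1 (mem_inter.1 hx).1, (mem_inter.1 hx).2⟩⟩⟩
  have hxγ := (mem_inter.1 hx).2
  -- `x` was added after stage `β`, so it lies above every element of `f(β)`
  exact (hf.isOrdinal_stageSup hXo hβ).mem_of_subset_of_mem hγ (sUnion_subset fun y hy =>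
    (hγ.mem hxγ).subset_of_mem (hext.2 x (mem_inter.1 hx).1 hxβ y hy)) hxγ

end IsDescPlay

noncomputable def nextAbove (X t : ZFSet) : ZFSet := Classical.epsilon fun ξ => ξ ∈ X ∧ t ∈ ξ

theorem nextAbove_spec {X t : ZFSet} (h : ∃ ξ ∈ X, t ∈ ξ) :
    nextAbove X t ∈ X ∧ t ∈ nextAbove X t :=
  Classical.epsilon_spec (p := fun ξ => ξ ∈ X ∧ t ∈ ξ) h

noncomputable def hellstenMove (X x : ZFSet) : ZFSet :=
  insert (nextAbove X (⋃₀ ⋃₀ relRange x)) (⋃₀ relRange x)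

theorem hellstenMove_restrictF (X f β : ZFSet) :
    hellstenMove X (restrictF f β) = insert (nextAbove X (⋃₀ playUnion f β)) (playUnion f β) :=
  rfl

noncomputable def hellstenStrategy (κ X : ZFSet) : ZFSet :=
  pairSep (fun x q => q = hellstenMove X x) (powerset (prod κ (powerset X))) (powerset X)

theorem pair_mem_hellstenStrategy {κ X x q : ZFSet} :
    pair x q ∈ hellstenStrategy κ X ↔
      x ⊆ prod κ (powerset X) ∧ q ⊆ X ∧ q = hellstenMove X x := by
  simp only [hellstenStrategy, mem_pairSep, mem_powerset]
  constructor
  · rintro ⟨a, ha, b, hb, hab, rfl⟩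
    obtain ⟨rfl, rfl⟩ := pair_injective hab
    exact ⟨ha, hb, rfl⟩
  · rintro ⟨hx, hq, rfl⟩
    exact ⟨x, hx, _, hq, rfl, rfl⟩

theorem isFunctionLike_hellstenStrategy {κ X : ZFSet} :
    IsFunctionLike (hellstenStrategy κ X) := fun _ _ _ h h' =>
  (pair_mem_hellstenStrategy.1 h).2.2.trans (pair_mem_hellstenStrategy.1 h').2.2.symm

namespace IsDescPlay

variable {κ X α f γ η : ZFSet}

theorem restrictF_subset_prod (hf : IsDescPlay (T1 κ X) (T1Order κ X) α f) (hα : α ⊆ κ)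
    (β : ZFSet) : restrictF f β ⊆ prod κ (powerset X) := fun w hw => by
  obtain ⟨a, ha, c, hc, rfl⟩ := mem_prod.1 (hf.1.1 (mem_sep.1 hw).1)
  exact pair_mem_prod.2 ⟨hα ha, mem_powerset.2 (mem_T1_iff.1 hc).1⟩

theorem exists_limit_stage (hf : IsDescPlay (T1 κ X) (T1Order κ X) α f)
    (hXo : ∀ y ∈ X, y.IsOrdinal) (hα : α.IsOrdinal) (hηo : η.IsOrdinal)
    (hη : η ∈ limitPoints (stageSup f '' α) γ) {b : ZFSet} (hb : b ∈ α)
    (hηb : η ⊆ stageSup f b) :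
    ∃ βs ∈ α, IsLimitZ βs ∧ ⋃₀ playUnion f βs = η ∧ ∀ β ∈ βs, stageSup f β ∈ η := by
  obtain ⟨-, ⟨_, ⟨β₀, hβ₀, rfl⟩, hβ₀η⟩, hlim⟩ := mem_sep.1 hη
  obtain ⟨βs, ⟨hβsα, hηβs⟩, hmin⟩ :=
    mem_wf.has_min {β | β ∈ α ∧ η ⊆ stageSup f β} ⟨b, hb, hηb⟩
  have hβso := hα.mem hβsα
  have hbelow : ∀ β ∈ βs, stageSup f β ∈ η := fun β hβ =>
    (hηo.not_subset_iff_mem (hf.isOrdinal_stageSup hXo (hα.mem_trans hβ hβsα))).1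
      fun h => hmin β ⟨hα.mem_trans hβ hβsα, h⟩ hβ
  have hstage : ∀ β ∈ α, stageSup f β ∈ η → β ∈ βs := fun β hβ hσ =>
    ((hα.mem hβ).mem_or_subset hβso).resolve_right fun h =>
      mem_irrefl _ ((hηβs.trans (hf.stageSup_mono hα hβ hβsα h)) hσ)
  have hcover : ∀ ζ ∈ η, ∃ β ∈ βs, ζ ∈ stageSup f β := fun ζ hζ => by
    obtain ⟨_, ⟨β, hβ, rfl⟩, hζβ, hβη⟩ := hlim ζ hζ
    exact ⟨β, hstage β hβ hβη, hζβ⟩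
  refine ⟨βs, hβsα, ⟨hβso, fun h0 => notMem_empty β₀ (h0 ▸ hstage β₀ hβ₀ hβ₀η), fun β hβ => ?_⟩,
    ZFSet.ext fun ζ => ⟨fun hζ => ?_, fun hζ => ?_⟩, hbelow⟩
  · -- at a successor stage `β + 1` the supremum `stageSup f β < η` would already cover `η`
    have hβo := hβso.mem hβ
    refine ((isOrdinal_succ hβo).mem_or_subset hβso).resolve_right fun hsub => ?_
    have hcov : η ⊆ stageSup f β := fun ζ hζ => by
      obtain ⟨β', hβ', hζβ'⟩ := hcover ζ hζ
      have hβ'β : β' ⊆ β := by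
        rcases mem_insert_iff.1 (hsub hβ') with rfl | h
        exacts [subset_rfl, hβo.subset_of_mem h]
      exact hf.stageSup_mono hα (hα.mem_trans hβ hβsα) (hα.mem_trans hβ' hβsα) hβ'β hζβ'
    exact mem_irrefl _ (hcov (hbelow β hβ))
  · obtain ⟨y, hy, hζy⟩ := mem_sUnion.1 hζ
    obtain ⟨β, hβ, hyβ⟩ := (hf.mem_playUnion (hα.subset_of_mem hβsα)).1 hy
    exact hηo.mem_trans (subset_stageSup hyβ hζy) (hbelow β hβ)
  · obtain ⟨β, hβ, hζβ⟩ := hcover ζ hζ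
    obtain ⟨y, hy, hζy⟩ := mem_sUnion.1 hζβ
    exact mem_sUnion_of_mem hζy ((hf.mem_playUnion (hα.subset_of_mem hβsα)).2 ⟨β, hβ, hy⟩)

/-- At the limit stage where the stage suprema reach `η`, Player II has jumped above `η`. -/
theorem notMem_playUnion_of_mem_limitPoints (hf : IsDescPlay (T1 κ X) (T1Order κ X) α f)
    (hXo : ∀ y ∈ X, y.IsOrdinal) (hXmax : ∀ t ∈ X, ∃ ξ ∈ X, t ∈ ξ) (hα : α.IsOrdinal)
    (hII : ∀ β ∈ α, IsLimitZ β → app f β = hellstenMove X (restrictF f β))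
    (hηo : η.IsOrdinal) (hη : η ∈ limitPoints (stageSup f '' α) γ) : η ∉ playUnion f α := by
  intro hηU
  obtain ⟨b, hb, hηb⟩ := (hf.mem_playUnion subset_rfl).1 hηU
  obtain ⟨βs, hβsα, hlimit, hsup, hbelow⟩ :=
    hf.exists_limit_stage hXo hα hηo hη hb (subset_stageSup hηb)
  have hβs := hII βs hβsα hlimit
  rw [hellstenMove_restrictF, hsup] at hβs
  have hξ := nextAbove_spec (hXmax η ((mem_T1_iff.1 (hf.app_mem_T1 hb)).1 hηb))
  have hbefore : ∀ β ∈ βs, η ∉ app f β := fun β hβ hηβ =>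
    mem_irrefl _ (subset_stageSup hηβ (hbelow β hβ))
  have hat : η ∉ app f βs := by
    rw [hβs]
    intro hηβs
    rcases mem_insert_iff.1 hηβs with h | h
    · have hηη := hξ.2
      rw [← h] at hηη
      exact mem_irrefl η hηη
    · obtain ⟨β, hβ, hηβ⟩ := (hf.mem_playUnion (hα.subset_of_mem hβsα)).1 h
      exact hbefore β hβ hηβ
  rcases (hα.mem hb).mem_trichotomous (hα.mem hβsα) with h | rfl | h
  · exact hbefore b h hηb
  · exact hat hηb
  · refine mem_asymm hξ.2 ((hf.isEndExtension hb h).2 η hηb hat _ ?_)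
    rw [hβs]
    exact mem_insert _ _

theorem isOneClosedIn_playUnion (hf : IsDescPlay (T1 κ X) (T1Order κ X) α f)
    (hXo : ∀ y ∈ X, y.IsOrdinal) (hXmax : ∀ t ∈ X, ∃ ξ ∈ X, t ∈ ξ) (hα : α.IsOrdinal)
    (hII : ∀ β ∈ α, IsLimitZ β → app f β = hellstenMove X (restrictF f β)) :
    IsOneClosedIn Set.univ (playUnion f α) κ := by
  intro γ hγκ hγ hstat
  have hγo := hγ.1.1.1
  rcases hf.exists_inter_eq_or_stageSup_mem hXo hα hγo with ⟨β, hβ, heq⟩ | hσγ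
  · rw [heq] at hstat
    exact (hf.isEndExtension_playUnion hα hβ).1
      ((mem_T1_iff.1 (hf.app_mem_T1 hβ)).2.2 γ hγκ hγ hstat)
  exfalso
  by_cases hunb : ∀ δ ∈ γ, ∃ a ∈ stageSup f '' α, δ ∈ a
  · have hclub := isClubIn_limitPoints hγ.1 hγ.2.1
      (by rintro _ ⟨β, hβ, rfl⟩; exact hσγ β hβ) hunb
    obtain ⟨η, hηU, hηC⟩ := hstat _ trivial hclub
    exact hf.notMem_playUnion_of_mem_limitPoints hXo hXmax hα hII
      (hγo.mem (mem_sep.1 hηC).1) hηC (mem_inter.1 hηU).1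
  · push Not at hunb
    obtain ⟨δ, hδ, hbound⟩ := hunb
    obtain ⟨x, hx, hδx⟩ := hstat.exists_mem_gt hγ.isLimitZ hδ
    obtain ⟨β, hβ, hxβ⟩ := (hf.mem_playUnion subset_rfl).1 (mem_inter.1 hx).1
    exact hbound _ ⟨β, hβ, rfl⟩ (subset_stageSup hxβ hδx)

theorem hellstenMove_spec (hf : IsDescPlay (T1 κ X) (T1Order κ X) α f)
    (hκ : IsRegularIn Set.univ κ) (hX : X ⊆ κ) (hunb : ∀ β ∈ κ, ∃ ξ ∈ X, β ∈ ξ) (hα : α ∈ κ)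
    (hII : ∀ β ∈ α, IsLimitZ β → app f β = hellstenMove X (restrictF f β)) :
    hellstenMove X (restrictF f α) ∈ T1 κ X ∧
      ∀ β ∈ α, IsEndExtension (hellstenMove X (restrictF f α)) (app f β) := by
  have hκo := hκ.1.1
  have hXo : ∀ y ∈ X, y.IsOrdinal := fun y hy => hκo.mem (hX hy)
  have hαo := hκo.mem hα
  obtain ⟨hξX, hsupξ⟩ := nextAbove_spec (hunb _ (hf.sUnion_playUnion_mem hXo hκ hα))
  rw [hellstenMove_restrictF]
  set ξ := nextAbove X (⋃₀ playUnion f α)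
  have hUX : ∀ y ∈ playUnion f α, y ∈ X := fun y hy => by
    obtain ⟨β, hβ, hyβ⟩ := (hf.mem_playUnion subset_rfl).1 hy
    exact (mem_T1_iff.1 (hf.app_mem_T1 hβ)).1 hyβ
  have hUξ : ∀ y ∈ playUnion f α, y ∈ ξ := fun y hy =>
    (hXo y (hUX y hy)).mem_of_subset_of_mem (hXo ξ hξX) (subset_sUnion_of_mem hy) hsupξ
  obtain ⟨ξ', hξ'X, hξξ'⟩ := hunb ξ (hX hξX)
  refine ⟨mem_T1_iff.2 ⟨fun y hy => ?_, ⟨ξ', hX hξ'X, fun y hy => ?_⟩, ?_⟩,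
    fun β hβ => (isEndExtension_insert hUξ).trans (hf.isEndExtension_playUnion hαo hβ)⟩
  · rcases mem_insert_iff.1 hy with rfl | hy
    exacts [hξX, hUX y hy]
  · rcases mem_insert_iff.1 hy with rfl | hy
    exacts [hξξ', (hXo ξ' hξ'X).mem_trans (hUξ y hy) hξξ']
  · exact isOneClosedIn_insert hκo
      (hf.isOneClosedIn_playUnion hXo (fun t ht => hunb t (hX ht)) hαo hII) (hXo ξ hξX) hUξ

end IsDescPlay

/-- **Hellsten.** If `κ` is inaccessible and `X ⊆ κ` is unbounded in `κ`, then
the 1-club shooting forcing `T¹(X)` is `κ`-strategically closed. -/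
theorem T1_kappa_strategically_closed (κ X : ZFSet)
    (hκ : IsInaccessibleIn Set.univ κ) (hX : X ⊆ κ)
    (hunb : ∀ β ∈ κ, ∃ ξ ∈ X, β ∈ ξ) :
    IsStratClosedIn Set.univ (T1 κ X) (T1Order κ X) κ := by
  refine ⟨hellstenStrategy κ X, trivial, isFunctionLike_hellstenStrategy, ?_⟩
  intro α hα f _ hf hfollow _
  have hII : ∀ β ∈ α, IsLimitZ β → app f β = hellstenMove X (restrictF f β) := fun β hβ hlim =>
    (pair_mem_hellstenStrategy.1 (hfollow β hβ (Or.inl hlim))).2.2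
  obtain ⟨hq, hext⟩ := hf.hellstenMove_spec hκ.1 hX hunb hα hII
  refine ⟨_, pair_mem_hellstenStrategy.2 ⟨hf.restrictF_subset_prod
    (hκ.1.1.1.subset_of_mem hα) α, (mem_T1_iff.1 hq).1, rfl⟩, hq, fun β hβ => ?_⟩
  exact zle_T1Order_iff.2 ⟨hq, hf.app_mem_T1 hβ, hext β hβ⟩
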